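/- arXiv:2511.17992 — 3 statements merged into one kernel-verified Lean document; each statement's English description precedes it below -/
import Mathlib

section
/- Let Λ be a symmetric positive definite N×N matrix, Φ an invertible N×N matrix, and Q a symmetric positive semidefinite N×N matrix such that Q + Φ Λ⁻¹ Φᵀ is invertible. Then (Q + Φ Λ⁻¹ Φᵀ)⁻¹ Φ v = 0 for every vector v in the null space of Λ; equivalently, the null space of the propagated information matrix (Q + Φ Λ⁻¹ Φᵀ)⁻¹ contains Φ·(null space of Λ). -/
open Matrix

/-!
With `S = Φ⁻ᵀ Λ Φ⁻¹` and `M = Q⁻¹ + S` (positive definite, hence invertible), the Woodbury-type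
identity `Q⁻¹ - Q⁻¹ M⁻¹ Q⁻¹ = Q⁻¹ M⁻¹ S` shows that the propagated information matrix is
`(Q⁻¹ M⁻¹ Φ⁻ᵀ) (Λ Φ⁻¹)` with an invertible left factor. Its kernel is therefore that of `Λ Φ⁻¹`,
which is `Φ · ker Λ`.
-/

namespace Matrix

variable {n R : Type*} [Fintype n] [DecidableEq n] [CommRing R]

theorem sub_mul_nonsing_inv_add_mul (A S : Matrix n n R) (h : IsUnit (A + S)) :
    A - A * (A + S)⁻¹ * A = A * (A + S)⁻¹ * S := by
  have hinv : (A + S)⁻¹ * (A + S) = 1 := nonsing_inv_mul _ ((isUnit_iff_isUnit_det _).mp h)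
  calc A - A * (A + S)⁻¹ * A = A * ((A + S)⁻¹ * (A + S)) - A * (A + S)⁻¹ * A := by
        rw [hinv, Matrix.mul_one]
    _ = A * (A + S)⁻¹ * S := by noncomm_ring

theorem nonsing_inv_mulVec_mulVec {P : Matrix n n R} (hP : IsUnit P) (x : n → R) :
    P⁻¹ *ᵥ P *ᵥ x = x := by
  rw [mulVec_mulVec, nonsing_inv_mul P ((isUnit_iff_isUnit_det P).mp hP), one_mulVec]

theorem mulVec_nonsing_inv_mulVec {P : Matrix n n R} (hP : IsUnit P) (x : n → R) :
    P *ᵥ P⁻¹ *ᵥ x = x := by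
  rw [mulVec_mulVec, mul_nonsing_inv P ((isUnit_iff_isUnit_det P).mp hP), one_mulVec]

theorem ker_mulVecLin_isUnit_mul {P : Matrix n n R} (hP : IsUnit P) (B : Matrix n n R) :
    LinearMap.ker (P * B).mulVecLin = LinearMap.ker B.mulVecLin := by
  have hinj : Function.Injective P.mulVecLin :=
    Function.LeftInverse.injective (g := (P⁻¹ *ᵥ ·)) (nonsing_inv_mulVec_mulVec hP)
  rw [mulVecLin_mul, LinearMap.ker_comp_of_ker_eq_bot _ (LinearMap.ker_eq_bot.mpr hinj)]

theorem ker_mulVecLin_mul_nonsing_inv {Φ : Matrix n n R} (hΦ : IsUnit Φ) (B : Matrix n n R) :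
    LinearMap.ker (B * Φ⁻¹).mulVecLin = Submodule.map Φ.mulVecLin (LinearMap.ker B.mulVecLin) := by
  ext x
  simp only [Submodule.mem_map, LinearMap.mem_ker, mulVecLin_apply, ← mulVec_mulVec]
  constructor
  · intro hx
    exact ⟨Φ⁻¹ *ᵥ x, hx, mulVec_nonsing_inv_mulVec hΦ x⟩
  · rintro ⟨y, hy, rfl⟩
    rwa [nonsing_inv_mulVec_mulVec hΦ]

end Matrix

/-- Information propagation preserves (and transports) the null space:
for Q symmetric positive definite, Φ invertible, Λ symmetric PSD,
ker(Q⁻¹ - Q⁻¹(Q⁻¹ + Φ⁻ᵀΛΦ⁻¹)⁻¹Q⁻¹) = Φ · ker(Λ). -/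
theorem stmt1 (N : ℕ) (Λ Q Φ : Matrix (Fin N) (Fin N) ℝ)
    (hΛ : Λ.PosSemidef) (hQ : Q.PosDef) (hΦ : IsUnit Φ) :
    LinearMap.ker (Q⁻¹ - Q⁻¹ * (Q⁻¹ + (Φ⁻¹)ᵀ * Λ * Φ⁻¹)⁻¹ * Q⁻¹).mulVecLin
      = Submodule.map Φ.mulVecLin (LinearMap.ker Λ.mulVecLin) := by
  have hΦinv : IsUnit Φ⁻¹ := isUnit_nonsing_inv_iff.mpr hΦ
  have hConj : ((Φ⁻¹)ᵀ * Λ * Φ⁻¹).PosSemidef := by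
    simpa only [conjTranspose_eq_transpose_of_trivial] using hΛ.conjTranspose_mul_mul_same Φ⁻¹
  have hM : IsUnit (Q⁻¹ + (Φ⁻¹)ᵀ * Λ * Φ⁻¹) := (hQ.inv.add_posSemidef hConj).isUnit
  rw [sub_mul_nonsing_inv_add_mul _ _ hM,
    ker_mulVecLin_isUnit_mul (hQ.inv.isUnit.mul (isUnit_nonsing_inv_iff.mpr hM)), Matrix.mul_assoc,
    ker_mulVecLin_isUnit_mul ((isUnit_transpose _).mpr hΦinv), ker_mulVecLin_mul_nonsing_inv hΦ]
end

section
/- Let g ∈ ℝ³ be nonzero. For R ∈ SO(3), p, v ∈ ℝ³, define the 9×4 matrix N(R,p,v) with block rows [0₃ₓ₃, −Rᵀg], [I₃, [p]×g], [0₃ₓ₃, [v]×g]. Define the 9×9 block matrix T(R,p,v) with block rows [R, 0, 0], [[p]×R, I₃, 0], [[v]×R, 0, I₃]. Then T(R,p,v) · N(R,p,v) = N₀, where N₀ is the constant matrix with block rows [0₃ₓ₃, −g], [I₃, 0], [0₃ₓ₃, 0]. -/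
open Matrix

/-- Skew-symmetric cross-product matrix [x]×. -/
def skew (x : Fin 3 → ℝ) : Matrix (Fin 3) (Fin 3) ℝ :=
  !![0, -x 2, x 1; x 2, 0, -x 0; -x 1, x 0, 0]

/-- A 3-vector viewed as a one-column matrix. -/
def col1 (x : Fin 3 → ℝ) : Matrix (Fin 3) Unit ℝ :=
  Matrix.of fun i _ => x i

/-- The 9×4 unobservable-subspace basis N(R,p,v) with block rows
[0, −Rᵀg], [I₃, [p]×g], [0, [v]×g]. -/
def Nmat (g : Fin 3 → ℝ) (R : Matrix (Fin 3) (Fin 3) ℝ) (p v : Fin 3 → ℝ) :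
    Matrix (Fin 3 ⊕ (Fin 3 ⊕ Fin 3)) (Fin 3 ⊕ Unit) ℝ :=
  Matrix.fromBlocks 0 (col1 (-(Rᵀ *ᵥ g)))
    (Matrix.fromRows 1 0) (Matrix.fromRows (col1 (skew p *ᵥ g)) (col1 (skew v *ᵥ g)))

/-- The 9×9 auxiliary transformation T(R,p,v) with block rows
[R,0,0], [[p]×R, I₃, 0], [[v]×R, 0, I₃]. -/
def Tmat (R : Matrix (Fin 3) (Fin 3) ℝ) (p v : Fin 3 → ℝ) :
    Matrix (Fin 3 ⊕ (Fin 3 ⊕ Fin 3)) (Fin 3 ⊕ (Fin 3 ⊕ Fin 3)) ℝ :=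
  Matrix.fromBlocks R 0 (Matrix.fromRows (skew p * R) (skew v * R)) 1

/-! Since `R Rᵀ = 1`, the block `R · (−Rᵀg)` is `−g`, and then
`[w]× R (−Rᵀg) = −[w]× g` cancels the `[w]× g` entries of `N` for `w = p, v`. -/

lemma mul_col1 (M : Matrix (Fin 3) (Fin 3) ℝ) (x : Fin 3 → ℝ) : M * col1 x = col1 (M *ᵥ x) :=
  (replicateCol_mulVec M x).symm

lemma col1_add (x y : Fin 3 → ℝ) : col1 x + col1 y = col1 (x + y) :=
  (replicateCol_add x y).symm

lemma mulVec_transpose_mulVec_of_transpose_mul_self {n α : Type*} [Fintype n] [DecidableEq n]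
    [CommRing α] {R : Matrix n n α} (hR : Rᵀ * R = 1) (x : n → α) : R *ᵥ (Rᵀ *ᵥ x) = x := by
  rw [mulVec_mulVec, mul_eq_one_comm.mp hR, one_mulVec]

lemma fromRows_add_fromRows {m₁ m₂ n α : Type*} [Add α] (A₁ B₁ : Matrix m₁ n α)
    (A₂ B₂ : Matrix m₂ n α) : fromRows A₁ A₂ + fromRows B₁ B₂ = fromRows (A₁ + B₁) (A₂ + B₂) := by
  ext (i | i) j <;> rfl

theorem stmt10_general (g : Fin 3 → ℝ) (R : Matrix (Fin 3) (Fin 3) ℝ)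
    (hR : Rᵀ * R = 1) (p v : Fin 3 → ℝ) :
    Tmat R p v * Nmat g R p v
      = Matrix.fromBlocks 0 (col1 (-g)) (Matrix.fromRows 1 0)
          (Matrix.fromRows (col1 0) (col1 0)) := by
  have hg : R * col1 (-(Rᵀ *ᵥ g)) = col1 (-g) := by
    rw [mul_col1, mulVec_neg, mulVec_transpose_mulVec_of_transpose_mul_self hR]
  have hcancel (w : Fin 3 → ℝ) :
      skew w * R * col1 (-(Rᵀ *ᵥ g)) + col1 (skew w *ᵥ g) = col1 0 := by
    rw [Matrix.mul_assoc, hg, mul_col1, col1_add, mulVec_neg, neg_add_cancel]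
  rw [Tmat, Nmat, fromBlocks_multiply]
  simp only [Matrix.mul_zero, Matrix.zero_mul, Matrix.one_mul, add_zero, zero_add, fromRows_mul,
    fromRows_add_fromRows, hg, hcancel]

/-- T(R,p,v) · N(R,p,v) = N₀, the constant matrix with block rows [0,−g],[I₃,0],[0,0]. -/
theorem stmt10 (g : Fin 3 → ℝ) (R : Matrix (Fin 3) (Fin 3) ℝ)
    (hR : Rᵀ * R = 1) (hdet : R.det = 1) (p v : Fin 3 → ℝ) :
    Tmat R p v * Nmat g R p v
      = Matrix.fromBlocks 0 (col1 (-g)) (Matrix.fromRows 1 0)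
          (Matrix.fromRows (col1 0) (col1 0)) :=
  stmt10_general g R hR p v
end

section
/- Let Λ ∈ ℝ^{(r+s)×(r+s)} be symmetric PSD and partitioned as [[Λ_rr, Λ_rm],[Λ_mr, Λ_mm]] with Λ_mm positive definite. Suppose ker Λ = { (u, w) : u ∈ U, w = φ(u) } for a subspace U ⊆ ℝʳ and a linear map φ : U → ℝˢ. Then the Schur complement Λ' = Λ_rr − Λ_rm Λ_mm⁻¹ Λ_mr satisfies ker Λ' = U. -/
open Matrix

/-- Marginalization preserves the unobservable subspace: if ker Λ consists exactly of
the vectors (u, φu) with u ∈ U, then the Schur complement Λ_rr − Λ_rm Λ_mm⁻¹ Λ_mr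
has kernel U. -/
theorem stmt16 (r s : ℕ) (Λ : Matrix (Fin r ⊕ Fin s) (Fin r ⊕ Fin s) ℝ)
    (hΛ : Λ.PosSemidef) (hmm : (Λ.toBlocks₂₂).PosDef)
    (U : Submodule ℝ (Fin r → ℝ)) (φ : U →ₗ[ℝ] (Fin s → ℝ))
    (hker : ∀ x : (Fin r ⊕ Fin s) → ℝ, Λ *ᵥ x = 0 ↔
      ∃ hu : (fun i => x (Sum.inl i)) ∈ U,
        (fun j => x (Sum.inr j)) = φ ⟨fun i => x (Sum.inl i), hu⟩) :
    LinearMap.ker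
      (Λ.toBlocks₁₁ - Λ.toBlocks₁₂ * (Λ.toBlocks₂₂)⁻¹ * Λ.toBlocks₂₁).mulVecLin = U := by
  set A := Λ.toBlocks₁₁ with hA
  set B := Λ.toBlocks₁₂ with hB
  set C := Λ.toBlocks₂₁ with hC
  set D := Λ.toBlocks₂₂ with hDdef
  have hDdet : IsUnit D.det := isUnit_iff_ne_zero.mpr hmm.det_pos.ne'
  have hΛblocks : Λ = Matrix.fromBlocks A B C D := (Matrix.fromBlocks_toBlocks Λ).symm
  ext u
  simp only [LinearMap.mem_ker, Matrix.mulVecLin_apply]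
  constructor
  · intro h
    set w : Fin s → ℝ := -(D⁻¹ *ᵥ (C *ᵥ u)) with hw
    have hx : Λ *ᵥ Sum.elim u w = 0 := by
      rw [hΛblocks, Matrix.fromBlocks_mulVec]
      have h1 : A *ᵥ u + B *ᵥ w = 0 := by
        rw [hw, Matrix.mulVec_neg, Matrix.mulVec_mulVec, Matrix.mulVec_mulVec]
        rw [Matrix.sub_mulVec] at h
        rw [← sub_eq_add_neg]
        exact h
      have h2 : C *ᵥ u + D *ᵥ w = 0 := by
        rw [hw, Matrix.mulVec_neg, Matrix.mulVec_mulVec,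
          Matrix.mul_nonsing_inv D hDdet, Matrix.one_mulVec]
        simp
      simp only [Sum.elim_comp_inl, Sum.elim_comp_inr]
      rw [h1, h2]
      ext (i | j) <;> simp
    obtain ⟨hu, -⟩ := (hker _).mp hx
    exact hu
  · intro hu
    set w : Fin s → ℝ := φ ⟨u, hu⟩ with hw
    have hx : Λ *ᵥ Sum.elim u w = 0 := (hker _).mpr ⟨hu, rfl⟩
    rw [hΛblocks, Matrix.fromBlocks_mulVec] at hx
    simp only [Sum.elim_comp_inl, Sum.elim_comp_inr] at hx
    have h1 : A *ᵥ u + B *ᵥ w = 0 := funext fun i => congrFun hx (Sum.inl i)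
    have h2 : C *ᵥ u + D *ᵥ w = 0 := funext fun j => congrFun hx (Sum.inr j)
    have hw2 : w = -(D⁻¹ *ᵥ (C *ᵥ u)) := by
      have := congrArg (fun v => D⁻¹ *ᵥ v) h2
      simp only [Matrix.mulVec_add, Matrix.mulVec_mulVec,
        Matrix.nonsing_inv_mul D hDdet, Matrix.one_mulVec, Matrix.mulVec_zero] at this
      rw [← Matrix.mulVec_mulVec] at this
      exact eq_neg_of_add_eq_zero_right this
    have hB3 : (B * D⁻¹ * C) *ᵥ u = B *ᵥ (D⁻¹ *ᵥ (C *ᵥ u)) := by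
      rw [← Matrix.mulVec_mulVec, ← Matrix.mulVec_mulVec]
    rw [Matrix.sub_mulVec, hB3,
      show D⁻¹ *ᵥ C *ᵥ u = -w from by rw [hw2, neg_neg],
      Matrix.mulVec_neg, sub_neg_eq_add]
    exact h1
end
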